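/- arXiv:2409.01593 — 4 statements merged into one kernel-verified Lean document; each statement's English description precedes it below -/
import Mathlib

section
/- Let x, y, z be vectors in ℝ^d with ‖x − y‖ = r, ‖x − z‖ ≤ r, and ‖y − z‖ ≤ r. Let x* = (1 − μ)x + μy for some μ ∈ (0,1). Then ‖z − x*‖ ≤ r·√(1 − μ + μ²). -/
/-!
Writing `x* = (1 - μ) x + μ y`, Stewart's identity
`‖z - x*‖² = (1 - μ) ‖z - x‖² + μ ‖z - y‖² - μ (1 - μ) ‖x - y‖²`
turns the claim into `(1 - μ) r² + μ r² - μ (1 - μ) r² = r² (1 - μ + μ²)`.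
-/

section

variable {E : Type*} [NormedAddCommGroup E] [InnerProductSpace ℝ E]

theorem norm_sub_smul_add_smul_sq (x y z : E) (μ : ℝ) :
    ‖z - ((1 - μ) • x + μ • y)‖ ^ 2
      = (1 - μ) * ‖z - x‖ ^ 2 + μ * ‖z - y‖ ^ 2 - μ * (1 - μ) * ‖x - y‖ ^ 2 := by
  have hv : z - ((1 - μ) • x + μ • y) = (1 - μ) • (z - x) + μ • (z - y) := by module
  have hxy : x - y = (z - y) - (z - x) := by abel
  rw [hv, hxy, norm_add_sq_real, norm_sub_sq_real (z - y), norm_smul, norm_smul,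
    real_inner_smul_left, real_inner_smul_right, real_inner_comm (z - x), mul_pow, mul_pow,
    Real.norm_eq_abs, Real.norm_eq_abs, sq_abs, sq_abs]
  ring

theorem norm_sub_smul_add_smul_le {x y z : E} {r μ : ℝ} (hμ₀ : 0 ≤ μ) (hμ₁ : μ ≤ 1)
    (hxy : ‖x - y‖ = r) (hzx : ‖z - x‖ ≤ r) (hzy : ‖z - y‖ ≤ r) :
    ‖z - ((1 - μ) • x + μ • y)‖ ≤ r * √(1 - μ + μ ^ 2) := by
  have hr : 0 ≤ r := hxy ▸ norm_nonneg _
  have hsq : ‖z - ((1 - μ) • x + μ • y)‖ ^ 2 ≤ (r * √(1 - μ + μ ^ 2)) ^ 2 := by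
    rw [norm_sub_smul_add_smul_sq, hxy, mul_pow, Real.sq_sqrt (by nlinarith)]
    linarith [mul_le_mul_of_nonneg_left (pow_le_pow_left₀ (norm_nonneg _) hzx 2)
        (sub_nonneg.2 hμ₁),
      mul_le_mul_of_nonneg_left (pow_le_pow_left₀ (norm_nonneg _) hzy 2) hμ₀]
  exact le_of_sq_le_sq hsq (by positivity)

end

theorem stmt0_general (d : ℕ) (r μ : ℝ) (hμ : μ ∈ Set.Ioo (0:ℝ) 1)
    (x y z : EuclideanSpace ℝ (Fin d))
    (hxy : ‖x - y‖ = r) (hxz : ‖x - z‖ ≤ r) (hyz : ‖y - z‖ ≤ r) :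
    ‖z - ((1 - μ) • x + μ • y)‖ ≤ r * Real.sqrt (1 - μ + μ ^ 2) :=
  norm_sub_smul_add_smul_le hμ.1.le hμ.2.le hxy (norm_sub_rev x z ▸ hxz) (norm_sub_rev y z ▸ hyz)

theorem stmt0 (d : ℕ) (r μ : ℝ) (hr : 0 < r) (hμ : μ ∈ Set.Ioo (0:ℝ) 1)
    (x y z : EuclideanSpace ℝ (Fin d))
    (hxy : ‖x - y‖ = r) (hxz : ‖x - z‖ ≤ r) (hyz : ‖y - z‖ ≤ r) :
    ‖z - ((1 - μ) • x + μ • y)‖ ≤ r * Real.sqrt (1 - μ + μ ^ 2) :=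
  stmt0_general d r μ hμ x y z hxy hxz hyz
end

section
/- Let P be an m×m row-stochastic matrix (m ≥ 2) with a stationary probability row vector π, let Π be the matrix with all rows equal to π, and suppose there exist constants c > 0 and α ∈ (0,1) such that for all k ≥ 1 and all i, ∑_j |(P^k)_{ij} − π_j| ≤ (c/2)α^k. Then for any k ≥ 1, any d ≥ 1, and any Y, Z ∈ ℝ^{m×d} with Y = P^k Z, one has max_{i,j} ‖Row_i(Y) − Row_j(Y)‖ ≤ c α^k max_{i,j} ‖Row_i(Z) − Row_j(Z)‖. -/
theorem stmt3 (m d : ℕ) (hm : 2 ≤ m) (hd : 1 ≤ d)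
    (P : Matrix (Fin m) (Fin m) ℝ)
    (hnonneg : ∀ i j, 0 ≤ P i j) (hrow : ∀ i, ∑ j, P i j = 1)
    (π : Fin m → ℝ) (hπ0 : ∀ i, 0 ≤ π i) (hπsum : ∑ i, π i = 1)
    (hstat : ∀ j, ∑ i, π i * P i j = π j)
    (c α : ℝ) (hc : 0 < c) (hα : α ∈ Set.Ioo (0:ℝ) 1)
    (hmix : ∀ k : ℕ, 1 ≤ k → ∀ i, ∑ j, |(P ^ k) i j - π j| ≤ c / 2 * α ^ k)
    (k : ℕ) (hk : 1 ≤ k)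
    (Y Z : Fin m → EuclideanSpace ℝ (Fin d))
    (hY : ∀ i, Y i = ∑ j, (P ^ k) i j • Z j) :
    (Finset.univ : Finset (Fin m × Fin m)).sup'
        ⟨(⟨0, by omega⟩, ⟨0, by omega⟩), Finset.mem_univ _⟩
        (fun pr => ‖Y pr.1 - Y pr.2‖)
      ≤ c * α ^ k *
        (Finset.univ : Finset (Fin m × Fin m)).sup'
        ⟨(⟨0, by omega⟩, ⟨0, by omega⟩), Finset.mem_univ _⟩
        (fun pr => ‖Z pr.1 - Z pr.2‖) := by
  obtain ⟨hα0, hα1⟩ := hα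
  -- row sums of P^n equal 1
  have hrowk : ∀ n : ℕ, ∀ i, ∑ j, (P ^ n) i j = 1 := by
    intro n
    induction n with
    | zero => intro i; simp [Matrix.one_apply]
    | succ n ih =>
      intro i
      rw [pow_succ]
      simp only [Matrix.mul_apply]
      rw [Finset.sum_comm]
      calc ∑ l, ∑ j, (P ^ n) i l * P l j
          = ∑ l, (P ^ n) i l * ∑ j, P l j := by
            simp [Finset.mul_sum]
        _ = 1 := by simp [hrow, ih i]
  set M := (Finset.univ : Finset (Fin m × Fin m)).sup'
        ⟨(⟨0, by omega⟩, ⟨0, by omega⟩), Finset.mem_univ _⟩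
        (fun pr => ‖Z pr.1 - Z pr.2‖) with hM
  have hMle : ∀ a b : Fin m, ‖Z a - Z b‖ ≤ M := fun a b =>
    Finset.le_sup' (fun pr : Fin m × Fin m => ‖Z pr.1 - Z pr.2‖) (Finset.mem_univ (a, b))
  have hM0 : 0 ≤ M := le_trans (by simp) (hMle ⟨0, by omega⟩ ⟨0, by omega⟩)
  apply Finset.sup'_le
  rintro ⟨i, j⟩ -
  simp only
  -- key identity
  have hzero : ∑ l, ((P ^ k) i l - (P ^ k) j l) • Z j = 0 := by
    rw [← Finset.sum_smul]
    simp [Finset.sum_sub_distrib, hrowk k i, hrowk k j]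
  have key : Y i - Y j = ∑ l, ((P ^ k) i l - (P ^ k) j l) • (Z l - Z j) := by
    calc Y i - Y j = ∑ l, (P ^ k) i l • Z l - ∑ l, (P ^ k) j l • Z l := by
          rw [hY i, hY j]
      _ = ∑ l, ((P ^ k) i l - (P ^ k) j l) • Z l := by
          rw [← Finset.sum_sub_distrib]; simp [sub_smul]
      _ = ∑ l, ((P ^ k) i l - (P ^ k) j l) • (Z l - Z j) := by
          simp only [smul_sub, Finset.sum_sub_distrib, hzero, sub_zero]
  have habs : ∑ l, |(P ^ k) i l - (P ^ k) j l| ≤ c * α ^ k := by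
    have h1 := hmix k hk i
    have h2 := hmix k hk j
    calc ∑ l, |(P ^ k) i l - (P ^ k) j l|
        ≤ ∑ l, (|(P ^ k) i l - π l| + |(P ^ k) j l - π l|) := by
          apply Finset.sum_le_sum
          intro l _
          have : (P ^ k) i l - (P ^ k) j l = ((P ^ k) i l - π l) - ((P ^ k) j l - π l) := by ring
          rw [this]
          exact abs_sub _ _
      _ = (∑ l, |(P ^ k) i l - π l|) + ∑ l, |(P ^ k) j l - π l| := Finset.sum_add_distrib
      _ ≤ c / 2 * α ^ k + c / 2 * α ^ k := add_le_add h1 h2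
      _ = c * α ^ k := by ring
  calc ‖Y i - Y j‖ = ‖∑ l, ((P ^ k) i l - (P ^ k) j l) • (Z l - Z j)‖ := by rw [key]
    _ ≤ ∑ l, ‖((P ^ k) i l - (P ^ k) j l) • (Z l - Z j)‖ := norm_sum_le _ _
    _ = ∑ l, |(P ^ k) i l - (P ^ k) j l| * ‖Z l - Z j‖ := by
        simp [norm_smul, Real.norm_eq_abs]
    _ ≤ ∑ l, |(P ^ k) i l - (P ^ k) j l| * M := by
        apply Finset.sum_le_sum
        intro l _
        exact mul_le_mul_of_nonneg_left (hMle l j) (abs_nonneg _)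
    _ = (∑ l, |(P ^ k) i l - (P ^ k) j l|) * M := by rw [Finset.sum_mul]
    _ ≤ c * α ^ k * M := mul_le_mul_of_nonneg_right habs hM0
end

section
/- Let μ_{k_s}, μ_{l_s} ∈ (0,1) and consider a finite set S of points in ℝ^d with diameter D realized by the pair (p, q) (i.e., ‖p − q‖ = D = max distance in S). Replace p by p' = (1−μ_{k_s})p + μ_{k_s}q and q by q' = (1−μ_{l_s})q + μ_{l_s}p, keeping all other points fixed. Then ‖p' − q'‖ = |1 − μ_{k_s} − μ_{l_s}|·D, and for every other point z ∈ S, ‖z − p'‖ ≤ √(1 − μ_{k_s} + μ_{k_s}²)·D and ‖z − q'‖ ≤ √(1 − μ_{l_s} + μ_{l_s}²)·D. -/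
/-!
Both inequalities follow from the identity
`‖(1 - μ) • a + μ • b‖² = (1 - μ) ‖a‖² + μ ‖b‖² - μ (1 - μ) ‖a - b‖²`
applied to `a = z - p`, `b = z - q`: the diameter bounds `‖a‖, ‖b‖ ≤ D` together with
`‖a - b‖ = ‖p - q‖ = D` give `(1 - μ + μ²) D²`.
-/

section InnerProductSpace

variable {E : Type*} [NormedAddCommGroup E] [InnerProductSpace ℝ E]

theorem norm_one_sub_smul_add_smul_sq (a b : E) (μ : ℝ) :
    ‖(1 - μ) • a + μ • b‖ ^ 2 =
      (1 - μ) * ‖a‖ ^ 2 + μ * ‖b‖ ^ 2 - μ * (1 - μ) * ‖a - b‖ ^ 2 := by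
  rw [norm_add_sq_real, norm_sub_sq_real, norm_smul, norm_smul, real_inner_smul_left,
    real_inner_smul_right, mul_pow, mul_pow, Real.norm_eq_abs, Real.norm_eq_abs, sq_abs, sq_abs]
  ring

theorem norm_sub_one_sub_smul_add_smul_le {x y z : E} {r μ : ℝ} (hxy : ‖x - y‖ = r)
    (hx : ‖z - x‖ ≤ r) (hy : ‖z - y‖ ≤ r) (hμ₀ : 0 ≤ μ) (hμ₁ : μ ≤ 1) :
    ‖z - ((1 - μ) • x + μ • y)‖ ≤ √(1 - μ + μ ^ 2) * r := by
  have hr : 0 ≤ r := hxy ▸ norm_nonneg _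
  have hsplit : z - ((1 - μ) • x + μ • y) = (1 - μ) • (z - x) + μ • (z - y) := by
    simp only [smul_sub, sub_smul, one_smul]; abel
  have hdiff : (z - x) - (z - y) = -(x - y) := by abel
  have hsq : ‖z - ((1 - μ) • x + μ • y)‖ ^ 2 ≤ (1 - μ + μ ^ 2) * r ^ 2 := by
    rw [hsplit, norm_one_sub_smul_add_smul_sq, hdiff, norm_neg, hxy]
    have hx2 : ‖z - x‖ ^ 2 ≤ r ^ 2 := pow_le_pow_left₀ (norm_nonneg _) hx 2
    have hy2 : ‖z - y‖ ^ 2 ≤ r ^ 2 := pow_le_pow_left₀ (norm_nonneg _) hy 2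
    nlinarith [mul_le_mul_of_nonneg_left hx2 (sub_nonneg.2 hμ₁), mul_le_mul_of_nonneg_left hy2 hμ₀]
  calc ‖z - ((1 - μ) • x + μ • y)‖ ≤ √((1 - μ + μ ^ 2) * r ^ 2) := Real.le_sqrt_of_sq_le hsq
    _ = √(1 - μ + μ ^ 2) * r := by rw [Real.sqrt_mul' _ (sq_nonneg r), Real.sqrt_sq hr]

end InnerProductSpace

theorem stmt16_general (d : ℕ) (μk μl D : ℝ)
    (hμk : μk ∈ Set.Ioo (0:ℝ) 1) (hμl : μl ∈ Set.Ioo (0:ℝ) 1)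
    (S : Finset (EuclideanSpace ℝ (Fin d)))
    (p q : EuclideanSpace ℝ (Fin d)) (hp : p ∈ S) (hq : q ∈ S)
    (hpq : ‖p - q‖ = D) (hmax : ∀ x ∈ S, ∀ y ∈ S, ‖x - y‖ ≤ D) :
    ‖((1 - μk) • p + μk • q) - ((1 - μl) • q + μl • p)‖ = |1 - μk - μl| * D ∧
    ∀ z ∈ S, z ≠ p → z ≠ q →
      ‖z - ((1 - μk) • p + μk • q)‖ ≤ Real.sqrt (1 - μk + μk ^ 2) * D ∧
      ‖z - ((1 - μl) • q + μl • p)‖ ≤ Real.sqrt (1 - μl + μl ^ 2) * D := by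
  have hnew : ((1 - μk) • p + μk • q) - ((1 - μl) • q + μl • p) = (1 - μk - μl) • (p - q) := by
    simp only [smul_sub, sub_smul, one_smul]; abel
  refine ⟨by rw [hnew, norm_smul, Real.norm_eq_abs, hpq], fun z hz _ _ => ⟨?_, ?_⟩⟩
  · exact norm_sub_one_sub_smul_add_smul_le hpq (hmax z hz p hp) (hmax z hz q hq)
      hμk.1.le hμk.2.le
  · exact norm_sub_one_sub_smul_add_smul_le (by rw [norm_sub_rev, hpq]) (hmax z hz q hq)
      (hmax z hz p hp) hμl.1.le hμl.2.le

theorem stmt16 (d : ℕ) (μk μl D : ℝ)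
    (hμk : μk ∈ Set.Ioo (0:ℝ) 1) (hμl : μl ∈ Set.Ioo (0:ℝ) 1) (hD : 0 < D)
    (S : Finset (EuclideanSpace ℝ (Fin d)))
    (p q : EuclideanSpace ℝ (Fin d)) (hp : p ∈ S) (hq : q ∈ S)
    (hpq : ‖p - q‖ = D) (hmax : ∀ x ∈ S, ∀ y ∈ S, ‖x - y‖ ≤ D) :
    ‖((1 - μk) • p + μk • q) - ((1 - μl) • q + μl • p)‖ = |1 - μk - μl| * D ∧
    ∀ z ∈ S, z ≠ p → z ≠ q →
      ‖z - ((1 - μk) • p + μk • q)‖ ≤ Real.sqrt (1 - μk + μk ^ 2) * D ∧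
      ‖z - ((1 - μl) • q + μl • p)‖ ≤ Real.sqrt (1 - μl + μl ^ 2) * D :=
  stmt16_general d μk μl D hμk hμl S p q hp hq hpq hmax
end

section
/- Let Φ = P(T−1)P(T−2)⋯P(0) be a product of T row-stochastic n×n matrices, each of the form P(s) = I or P(s) = I + μ_i E_{ij}(e_j−e_i-type averaging) with all diagonal entries of every P(s) at least 1 − μ_max > 0 and at most two off-diagonal entries per matrix. Then Φ ≥ δ_T [P(T−1) + ⋯ + P(0)] entrywise, where δ_T := ((1−μ_max)²/2)^{T−1}. -/
/-!
Write `c = (1 - μ)² / 2`. If `Q ≥ a S` entrywise, where `S` is a nonnegative matrix with diagonal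
at least `1 - μ`, then multiplying on the right by one more factor `M` gives `Q M ≥ a c (S + M)`:
the diagonal of `Q M` dominates `Q_kk M_kk`, and an off-diagonal entry dominates
`Q_kk M_kl + Q_kl M_ll`; in both cases the diagonal bounds `1 - μ` of `S` and `M` pay for the
factor `c`. Inducting along the product gives the bound `c^(T-1)` times the sum of the factors.
-/

open Finset

variable {n : Type*}

/-- The only properties of a row-stochastic factor with diagonal at least `1 - μ` that the
estimate uses. -/
structure IsLazy (μ : ℝ) (M : Matrix n n ℝ) : Prop where
  nonneg : ∀ i j, 0 ≤ M i j
  le_one : ∀ i j, M i j ≤ 1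
  one_sub_le_diag : ∀ i, 1 - μ ≤ M i i

namespace Matrix

variable [Fintype n] {Q M : Matrix n n ℝ}

theorem diag_mul_diag_le_mul_apply (hQ : ∀ i j, 0 ≤ Q i j) (hM : ∀ i j, 0 ≤ M i j) (k : n) :
    Q k k * M k k ≤ (Q * M) k k :=
  single_le_sum (f := fun m => Q k m * M m k) (fun m _ => mul_nonneg (hQ k m) (hM m k))
    (mem_univ k)

theorem diag_mul_add_mul_diag_le_mul_apply [DecidableEq n] (hQ : ∀ i j, 0 ≤ Q i j)
    (hM : ∀ i j, 0 ≤ M i j) {k l : n} (hkl : k ≠ l) :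
    Q k k * M k l + Q k l * M l l ≤ (Q * M) k l := by
  rw [← sum_pair (f := fun m => Q k m * M m l) hkl, mul_apply]
  exact sum_le_sum_of_subset_of_nonneg (subset_univ _)
    fun m _ _ => mul_nonneg (hQ k m) (hM m l)

theorem mul_apply_ge_of_le_smul {μ a : ℝ} {S : Matrix n n ℝ} (hμ0 : 0 ≤ μ) (hμ1 : μ ≤ 1)
    (ha : 0 ≤ a) (hS : ∀ i j, 0 ≤ S i j) (hSdiag : ∀ i, 1 - μ ≤ S i i)
    (hQS : ∀ i j, a * S i j ≤ Q i j) (hM : IsLazy μ M) (k l : n) :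
    a * ((1 - μ) ^ 2 / 2) * (S k l + M k l) ≤ (Q * M) k l := by
  have hQ : ∀ i j, 0 ≤ Q i j := fun i j => (mul_nonneg ha (hS i j)).trans (hQS i j)
  have hc : (1 - μ) ^ 2 / 2 ≤ 1 - μ := by nlinarith
  classical
  by_cases hkl : k = l
  · subst hkl
    have hSk := hSdiag k
    have hMk := hM.le_one k k
    calc a * ((1 - μ) ^ 2 / 2) * (S k k + M k k)
        ≤ a * S k k * (1 - μ) := by
          -- `M_kk ≤ 1 ≤ S_kk / (1 - μ)`, so `c (S_kk + M_kk) ≤ (1 - μ) (2 - μ) / 2 * S_kk`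
          have : (1 - μ) ^ 2 / 2 * (S k k + M k k) ≤ (1 - μ) * S k k := by nlinarith
          nlinarith
      _ ≤ Q k k * M k k :=
          mul_le_mul (hQS k k) (hM.one_sub_le_diag k) (by linarith) (hQ k k)
      _ ≤ (Q * M) k k := diag_mul_diag_le_mul_apply hQ hM.nonneg k
  · have hQkk : a * (1 - μ) ≤ Q k k :=
      (mul_le_mul_of_nonneg_left (hSdiag k) ha).trans (hQS k k)
    have h₁ : a * ((1 - μ) ^ 2 / 2) * M k l ≤ Q k k * M k l :=
      mul_le_mul_of_nonneg_right ((mul_le_mul_of_nonneg_left hc ha).trans hQkk) (hM.nonneg k l)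
    have h₂ : a * ((1 - μ) ^ 2 / 2) * S k l ≤ Q k l * M l l :=
      calc a * ((1 - μ) ^ 2 / 2) * S k l = a * S k l * ((1 - μ) ^ 2 / 2) := by ring
        _ ≤ Q k l * M l l :=
          mul_le_mul (hQS k l) (hc.trans (hM.one_sub_le_diag l)) (by positivity) (hQ k l)
    linarith [diag_mul_add_mul_diag_le_mul_apply hQ hM.nonneg hkl]

end Matrix

theorem List.sum_map_apply_nonneg {L : List (Matrix n n ℝ)} (hL : ∀ N ∈ L, ∀ i j, 0 ≤ N i j)
    (i j : n) : 0 ≤ (L.map fun N => N i j).sum :=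
  List.sum_nonneg <| by simpa using fun N hN => hL N hN i j

theorem List.one_sub_le_sum_map_apply_self {μ : ℝ} {M : Matrix n n ℝ} {L : List (Matrix n n ℝ)}
    (hL : ∀ N ∈ M :: L, IsLazy μ N) (i : n) : 1 - μ ≤ ((M :: L).map fun N => N i i).sum := by
  have := List.sum_map_apply_nonneg (fun N hN => (hL N (mem_cons_of_mem M hN)).nonneg) i i
  have := (hL M mem_cons_self).one_sub_le_diag i
  simp only [map_cons, sum_cons]
  linarith

theorem List.pow_length_mul_sum_map_apply_le_prod_reverse_apply [Fintype n] [DecidableEq n] {μ : ℝ}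
    (hμ0 : 0 ≤ μ) (hμ1 : μ ≤ 1) (L : List (Matrix n n ℝ)) (M : Matrix n n ℝ)
    (hL : ∀ N ∈ M :: L, IsLazy μ N) (k l : n) :
    ((1 - μ) ^ 2 / 2) ^ L.length * ((M :: L).map fun N => N k l).sum
      ≤ (M :: L).reverse.prod k l := by
  induction L generalizing M k l with
  | nil => simp
  | cons N L ih =>
    have hNL : ∀ A ∈ N :: L, IsLazy μ A := fun A hA => hL A (mem_cons_of_mem M hA)
    rw [reverse_cons, prod_append, prod_singleton, map_cons, sum_cons, length_cons, pow_succ,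
      add_comm (M k l)]
    exact Matrix.mul_apply_ge_of_le_smul hμ0 hμ1 (by positivity)
      (sum_map_apply_nonneg fun A hA => (hNL A hA).nonneg) (one_sub_le_sum_map_apply_self hNL)
      (ih N hNL) (hL M mem_cons_self) k l

theorem stmt18_general (n T : ℕ) (hT : 1 ≤ T) (μmax : ℝ)
    (hμmax : μmax ∈ Set.Ioo (0:ℝ) 1)
    (P : Fin T → Matrix (Fin n) (Fin n) ℝ)
    (hnonneg : ∀ s i j, 0 ≤ P s i j)
    (hrow : ∀ s i, ∑ j, P s i j = 1)
    (hdiag : ∀ s i, 1 - μmax ≤ P s i i) :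
    ∀ k l : Fin n,
      ((1 - μmax) ^ 2 / 2) ^ (T - 1) * (∑ s, P s k l)
        ≤ ((List.ofFn P).reverse.prod) k l := by
  obtain ⟨T, rfl⟩ := Nat.exists_eq_add_of_le' hT
  intro k l
  have hlazy : ∀ N ∈ List.ofFn P, IsLazy μmax N := by
    intro N hN
    obtain ⟨s, rfl⟩ := List.mem_ofFn.1 hN
    exact ⟨hnonneg s, fun i j => (hrow s i).le.trans' <|
      single_le_sum (fun m _ => hnonneg s i m) (mem_univ j), hdiag s⟩
  rw [List.ofFn_succ] at hlazy ⊢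
  simpa [List.sum_ofFn, Fin.sum_univ_succ] using
    List.pow_length_mul_sum_map_apply_le_prod_reverse_apply hμmax.1.le hμmax.2.le _ _ hlazy k l

theorem stmt18 (n T : ℕ) (hn : 2 ≤ n) (hT : 1 ≤ T) (μmax : ℝ)
    (hμmax : μmax ∈ Set.Ioo (0:ℝ) 1)
    (P : Fin T → Matrix (Fin n) (Fin n) ℝ)
    (hnonneg : ∀ s i j, 0 ≤ P s i j)
    (hrow : ∀ s i, ∑ j, P s i j = 1)
    (hdiag : ∀ s i, 1 - μmax ≤ P s i i)
    (hform : ∀ s, P s = 1 ∨ ∃ i j : Fin n, i ≠ j ∧ ∃ μi μj : ℝ,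
      μi ∈ Set.Ioo (0:ℝ) 1 ∧ μj ∈ Set.Ioo (0:ℝ) 1 ∧ μi ≤ μmax ∧ μj ≤ μmax ∧
      P s = 1 + Matrix.of (fun k l =>
        if k = i ∧ l = i then -μi else if k = i ∧ l = j then μi
        else if k = j ∧ l = j then -μj else if k = j ∧ l = i then μj else 0)) :
    ∀ k l : Fin n,
      ((1 - μmax) ^ 2 / 2) ^ (T - 1) * (∑ s, P s k l)
        ≤ ((List.ofFn P).reverse.prod) k l :=
  stmt18_general n T hT μmax hμmax P hnonneg hrow hdiag
end
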